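/- Let d > 1 be a squarefree integer such that exactly two rational primes ramify in K_d = ℚ(√d) (i.e. n_d = 2) and the class number h_d of K_d lies in {1,2}. If the smallest ramified prime p₁ satisfies p₁ ≡ 1 (mod 4), then h_d = 2. -/

import Mathlib

/-!
If `𝓞 K` is a principal ideal domain, every rational prime `r` that is not prime in `𝓞 K` is,
up to sign, the norm of an integer `β` of `K`. Since `2β = u + v√d` with `u, v ∈ ℤ`, the norm
`(u² - d v²) / 4` of `β` is a square modulo every odd prime dividing `d`.

As the smallest ramified prime is `p₁ ≡ 1 (mod 4)`, `2` does not ramify, so `d = p₁ q` with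
`q` odd. Dirichlet's theorem gives a prime `r ≡ 1 (mod 4)` that is a non-residue modulo both
`p₁` and `q`. By quadratic reciprocity `d ≡ s² (mod r)` for some `s`, so `r` divides
`(√d - s)(√d + s)`, but neither factor since `r ∤ 2`. Hence `±r` is a norm, yet it is a
non-residue modulo `p₁` because `-1` is a square modulo `p₁`; so `h_d ≠ 1`.
-/

open NumberField Module

/-- The discriminant of the real quadratic field `ℚ(√d)` for a squarefree integer `d > 1`. -/
def quadDisc (d : ℕ) : ℕ := if d % 4 = 1 then d else 4 * d

theorem Squarefree.exists_int_eq_of_mul_sq_eq {d : ℤ} (hd : Squarefree d) {y : ℚ} {k : ℤ}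
    (h : d * y ^ 2 = k) : ∃ v : ℤ, y = v := by
  have hden : ((y.den : ℤ) ^ 2) ∣ d * y.num ^ 2 := by
    refine ⟨k, ?_⟩
    rw [← Rat.num_div_den y, div_pow] at h
    field_simp at h
    qify; linear_combination h
  have hcop : IsCoprime ((y.den : ℤ) ^ 2) (y.num ^ 2) :=
    (Int.isCoprime_iff_gcd_eq_one.mpr (Int.gcd_comm _ _ ▸ y.reduced)).pow
  have hden1 : y.den = 1 := by
    have := hd _ (pow_two (y.den : ℤ) ▸ hcop.dvd_of_dvd_mul_right hden)
    simpa [Int.isUnit_iff_natAbs_eq] using this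
  exact ⟨y.num, by rw [← Rat.num_div_den y, hden1]; simp⟩

section QuadraticField

variable {K : Type*} [Field K] [CharZero K] {d : ℤ} {α : K}

theorem linearIndependent_one_of_sq_eq (hd : Squarefree d) (hd1 : d ≠ 1) (hα : α ^ 2 = d) :
    LinearIndependent ℚ ![1, α] := by
  rw [LinearIndependent.pair_iff' one_ne_zero]
  rintro c rfl
  have hcd : (1 : ℤ) * c ^ 2 = d := by
    rw [Algebra.smul_def, mul_one, eq_ratCast] at hα
    rw [Int.cast_one, one_mul]; exact_mod_cast hα
  obtain ⟨m, rfl⟩ := squarefree_one.exists_int_eq_of_mul_sq_eq hcd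
  have hmd : m ^ 2 = d := by exact_mod_cast (one_mul _).symm.trans hcd
  exact hd1 (hmd ▸ Int.isUnit_sq (hd m ⟨1, by rw [← hmd]; ring⟩))

section Basis

variable (hli : LinearIndependent ℚ ![(1 : K), α]) (hK : finrank ℚ K = 2)

noncomputable def sqrtBasis : Basis (Fin 2) ℚ K :=
  basisOfLinearIndependentOfCardEqFinrank hli (by simp [hK])

theorem coe_sqrtBasis : ⇑(sqrtBasis hli hK) = ![1, α] :=
  coe_basisOfLinearIndependentOfCardEqFinrank _ _

theorem sqrtBasis_repr (x y : ℚ) : ⇑((sqrtBasis hli hK).repr (x + y * α)) = ![x, y] := by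
  convert (sqrtBasis hli hK).repr_sum_self ![x, y]
  simp [coe_sqrtBasis, Algebra.smul_def]

theorem leftMulMatrix_sqrtBasis (hα : α ^ 2 = d) (x y : ℚ) :
    Algebra.leftMulMatrix (sqrtBasis hli hK) (x + y * α) = !![x, d * y; y, x] := by
  have hmul_one : (x + y * α) * 1 = x + y * α := mul_one _
  have hmul_α : (x + y * α) * α = ((d * y : ℚ) : K) + x * α := by
    push_cast
    linear_combination (y : K) * hα
  ext i j
  rw [Algebra.leftMulMatrix_eq_repr_mul, coe_sqrtBasis]
  fin_cases j
  · simp only [Fin.zero_eta, Matrix.cons_val_zero, hmul_one, sqrtBasis_repr]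
    fin_cases i <;> rfl
  · simp only [Fin.mk_one, Matrix.cons_val_one, Matrix.cons_val_zero, hmul_α, sqrtBasis_repr]
    fin_cases i <;> rfl

end Basis

theorem norm_add_mul_of_sq_eq (hli : LinearIndependent ℚ ![(1 : K), α]) (hK : finrank ℚ K = 2)
    (hα : α ^ 2 = d) (x y : ℚ) :
    Algebra.norm ℚ (x + y * α : K) = x ^ 2 - d * y ^ 2 := by
  rw [Algebra.norm_eq_matrix_det (sqrtBasis hli hK), leftMulMatrix_sqrtBasis hli hK hα,
    Matrix.det_fin_two_of]
  ring

theorem trace_add_mul_of_sq_eq (hli : LinearIndependent ℚ ![(1 : K), α]) (hK : finrank ℚ K = 2)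
    (hα : α ^ 2 = d) (x y : ℚ) :
    Algebra.trace ℚ K (x + y * α) = 2 * x := by
  rw [Algebra.trace_eq_matrix_trace (sqrtBasis hli hK), leftMulMatrix_sqrtBasis hli hK hα,
    Matrix.trace_fin_two_of]
  ring

theorem exists_eq_add_mul (hli : LinearIndependent ℚ ![(1 : K), α]) (hK : finrank ℚ K = 2)
    (z : K) : ∃ x y : ℚ, z = x + y * α := by
  refine ⟨(sqrtBasis hli hK).repr z 0, (sqrtBasis hli hK).repr z 1, ?_⟩
  conv_lhs => rw [← (sqrtBasis hli hK).sum_repr z]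
  simp [coe_sqrtBasis, Algebra.smul_def]

end QuadraticField

section RingOfIntegers

variable {K : Type*} [Field K] [NumberField K]

theorem NumberField.isUnit_iff_natAbs_norm_eq_one {x : 𝓞 K} :
    IsUnit x ↔ (Algebra.norm ℤ x).natAbs = 1 := by
  rw [isUnit_iff_norm, RingOfIntegers.coe_norm, ← Algebra.coe_norm_int, ← Int.cast_abs,
    Int.abs_eq_natAbs]
  norm_cast

theorem exists_natAbs_norm_eq_of_not_prime [IsPrincipalIdealRing (𝓞 K)]
    (hK : finrank ℚ K = 2) {r : ℕ} (hr : r.Prime) (hnp : ¬ Prime (r : 𝓞 K)) :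
    ∃ β : 𝓞 K, (Algebra.norm ℤ β).natAbs = r := by
  have hnorm_r : (Algebra.norm ℤ (r : 𝓞 K)).natAbs = r ^ 2 := by
    rw [← map_natCast (algebraMap ℤ (𝓞 K)), Algebra.norm_algebraMap, RingOfIntegers.rank, hK]
    simp
  have hr_nonunit : ¬ IsUnit (r : 𝓞 K) := by
    rw [isUnit_iff_natAbs_norm_eq_one, hnorm_r]
    exact (Nat.one_lt_pow two_ne_zero hr.one_lt).ne'
  obtain ⟨a, b, hab, ha, hb⟩ : ∃ a b : 𝓞 K, (r : 𝓞 K) = a * b ∧ ¬ IsUnit a ∧ ¬ IsUnit b := by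
    have := mt irreducible_iff_prime.mp hnp
    simpa [irreducible_iff, hr_nonunit] using this
  rw [isUnit_iff_natAbs_norm_eq_one] at ha hb
  rw [hab, map_mul, Int.natAbs_mul] at hnorm_r
  exact ⟨a, ((hr.mul_eq_prime_sq_iff ha hb).mp hnorm_r).1⟩

variable {d : ℤ} {α : K}

theorem exists_int_two_mul_eq_add_mul (hd : Squarefree d) (hα : α ^ 2 = d)
    (hli : LinearIndependent ℚ ![(1 : K), α]) (hK : finrank ℚ K = 2) (β : 𝓞 K) :
    ∃ u v : ℤ, 2 * (β : K) = u + v * α ∧ u ^ 2 - d * v ^ 2 = 4 * Algebra.norm ℤ β := by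
  obtain ⟨x, y, hxy⟩ := exists_eq_add_mul hli hK (β : K)
  have hnorm : (Algebra.norm ℤ β : ℚ) = x ^ 2 - d * y ^ 2 := by
    rw [Algebra.coe_norm_int, hxy, norm_add_mul_of_sq_eq hli hK hα]
  obtain ⟨u, hu⟩ : ∃ u : ℤ, (u : ℚ) = 2 * x :=
    ⟨Algebra.trace ℤ (𝓞 K) β,
      by rw [Algebra.coe_trace_int, hxy, trace_add_mul_of_sq_eq hli hK hα]⟩
  obtain ⟨v, hv⟩ := hd.exists_int_eq_of_mul_sq_eq (y := 2 * y)
    (k := u ^ 2 - 4 * Algebra.norm ℤ β) (by push_cast; rw [hu, hnorm]; ring)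
  refine ⟨u, v, ?_, ?_⟩
  · have hu' : (u : K) = 2 * x := by exact_mod_cast congrArg (Rat.cast : ℚ → K) hu
    have hv' : (v : K) = 2 * y := by exact_mod_cast congrArg (Rat.cast : ℚ → K) hv.symm
    rw [hxy, hu', hv']
    ring
  · have : ((u ^ 2 - d * v ^ 2 : ℤ) : ℚ) = 4 * Algebra.norm ℤ β := by
      push_cast
      rw [hu, ← hv, hnorm]
      ring
    exact_mod_cast this

theorem not_dvd_add_of_sq_eq (hd : Squarefree d) (hα : α ^ 2 = d)
    (hli : LinearIndependent ℚ ![(1 : K), α]) (hK : finrank ℚ K = 2) {r : ℤ} (hr : ¬ r ∣ 2)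
    (A : 𝓞 K) (hA : (A : K) = α) (t : ℤ) : ¬ (r : 𝓞 K) ∣ A + t := by
  rintro ⟨γ, hγ⟩
  obtain ⟨u, v, huv, -⟩ := exists_int_two_mul_eq_add_mul hd hα hli hK γ
  have hγK : α + t = r * (γ : K) := by
    rw [← hA]
    simpa only [map_add, map_mul, map_intCast] using congrArg (algebraMap (𝓞 K) K) hγ
  -- compare the coordinates of `2 (α + t) = r (u + v α)` in the basis `1, α`
  have hzero : ((2 * t - r * u : ℤ) : ℚ) • (1 : K) + ((2 - r * v : ℤ) : ℚ) • α = 0 := by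
    simp only [Algebra.smul_def, eq_ratCast, Rat.cast_intCast]
    push_cast
    linear_combination 2 * hγK + (r : K) * huv
  have h2 : 2 - r * v = 0 := by
    exact_mod_cast (LinearIndependent.pair_iff.mp hli _ _ hzero).2
  exact hr ⟨v, by linarith⟩

theorem not_prime_natCast_of_isSquare (hd : Squarefree d) (hα : α ^ 2 = d)
    (hli : LinearIndependent ℚ ![(1 : K), α]) (hK : finrank ℚ K = 2) {r : ℕ} (hr : r.Prime)
    (hr2 : r ≠ 2) (hsq : IsSquare (d : ZMod r)) : ¬ Prime (r : 𝓞 K) := by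
  have : Fact r.Prime := ⟨hr⟩
  obtain ⟨c, hc⟩ := hsq
  obtain ⟨m, hm⟩ : (r : ℤ) ∣ (c.val : ℤ) ^ 2 - d := by
    rw [← ZMod.intCast_zmod_eq_zero_iff_dvd]
    push_cast
    rw [ZMod.natCast_zmod_val, hc]
    ring
  obtain ⟨A, hA⟩ : ∃ A : 𝓞 K, (A : K) = α :=
    ⟨⟨α, IsIntegral.of_pow two_pos (by rw [hα]; exact isIntegral_algebraMap)⟩, rfl⟩
  have hfac : (A + (-c.val : ℤ)) * (A + (c.val : ℤ)) = (r : 𝓞 K) * (-m : ℤ) := by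
    have hmK : (c.val : K) ^ 2 - d = r * m := by
      exact_mod_cast congrArg (Int.cast : ℤ → K) hm
    ext
    simp only [RingOfIntegers.coe_eq_algebraMap, map_add, map_mul, map_intCast] at hA ⊢
    push_cast
    rw [hA]
    linear_combination hα - hmK
  have hr_two : ¬ (r : ℤ) ∣ 2 := by
    exact_mod_cast fun h => hr2 ((Nat.prime_dvd_prime_iff_eq hr Nat.prime_two).mp h)
  intro hprime
  rcases hprime.dvd_or_dvd ⟨_, hfac⟩ with h | h
  · exact not_dvd_add_of_sq_eq hd hα hli hK hr_two A hA (-c.val) (by exact_mod_cast h)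
  · exact not_dvd_add_of_sq_eq hd hα hli hK hr_two A hA c.val (by exact_mod_cast h)

theorem isSquare_intCast_norm_of_dvd (hd : Squarefree d) (hα : α ^ 2 = d)
    (hli : LinearIndependent ℚ ![(1 : K), α]) (hK : finrank ℚ K = 2) {p : ℕ} [Fact p.Prime]
    (hp2 : p ≠ 2) (hpd : (p : ℤ) ∣ d) (β : 𝓞 K) :
    IsSquare ((Algebra.norm ℤ β : ℤ) : ZMod p) := by
  obtain ⟨u, v, -, huv⟩ := exists_int_two_mul_eq_add_mul hd hα hli hK β
  have hd0 : (d : ZMod p) = 0 := (ZMod.intCast_zmod_eq_zero_iff_dvd _ _).mpr hpd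
  have h2 : (2 : ZMod p) ≠ 0 := Ring.two_ne_zero (by rwa [ZMod.ringChar_zmod_n])
  have huv_p := congrArg (Int.cast : ℤ → ZMod p) huv
  push_cast at huv_p
  rw [hd0, zero_mul, sub_zero] at huv_p
  refine ⟨u / 2, ?_⟩
  field_simp
  linear_combination (-1 : ZMod p) * huv_p

end RingOfIntegers

theorem FiniteField.isSquare_mul_of_not_isSquare {F : Type*} [Field F] [Fintype F]
    [DecidableEq F] {a b : F} (ha : ¬ IsSquare a) (hb : ¬ IsSquare b) : IsSquare (a * b) := by
  have ha0 : a ≠ 0 := by rintro rfl; exact ha IsSquare.zero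
  have hb0 : b ≠ 0 := by rintro rfl; exact hb IsSquare.zero
  rw [← quadraticChar_one_iff_isSquare (mul_ne_zero ha0 hb0), map_mul,
    quadraticChar_neg_one_iff_not_isSquare.mpr ha, quadraticChar_neg_one_iff_not_isSquare.mpr hb]
  norm_num

theorem exists_prime_mod_four_eq_one_not_isSquare {p q : ℕ} [Fact p.Prime] [Fact q.Prime]
    (hpq : p ≠ q) (hp2 : p ≠ 2) (hq2 : q ≠ 2) :
    ∃ r : ℕ, r.Prime ∧ r % 4 = 1 ∧ ¬ IsSquare (r : ZMod p) ∧ ¬ IsSquare (r : ZMod q) := by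
  obtain ⟨a, ha⟩ := FiniteField.exists_nonsquare (F := ZMod p) (by rwa [ZMod.ringChar_zmod_n])
  obtain ⟨b, hb⟩ := FiniteField.exists_nonsquare (F := ZMod q) (by rwa [ZMod.ringChar_zmod_n])
  have hpq' : p.Coprime q := (Nat.coprime_primes Fact.out Fact.out).mpr hpq
  have h4 : Nat.Coprime 4 (p * q) := by
    have hodd : ∀ {ℓ : ℕ}, ℓ.Prime → ℓ ≠ 2 → Nat.Coprime 4 ℓ := fun hℓ hℓ2 =>
      Nat.Coprime.pow_left 2 ((Nat.coprime_primes Nat.prime_two hℓ).mpr (Ne.symm hℓ2))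
    exact Nat.Coprime.mul_right (hodd Fact.out hp2) (hodd Fact.out hq2)
  set e : ZMod (4 * (p * q)) :=
    (ZMod.chineseRemainder h4).symm (1, (ZMod.chineseRemainder hpq').symm (a, b)) with he
  have he_unit : IsUnit e := by
    refine IsUnit.map _ (Prod.isUnit_iff.mpr ⟨isUnit_one, IsUnit.map _ ?_⟩)
    have ha0 : a ≠ 0 := by rintro rfl; exact ha IsSquare.zero
    have hb0 : b ≠ 0 := by rintro rfl; exact hb IsSquare.zero
    exact Prod.isUnit_iff.mpr ⟨ha0.isUnit, hb0.isUnit⟩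
  have : NeZero (4 * (p * q)) :=
    ⟨mul_ne_zero four_ne_zero
      (mul_ne_zero (Fact.out : p.Prime).ne_zero (Fact.out : q.Prime).ne_zero)⟩
  obtain ⟨r, -, hr, hre⟩ := Nat.forall_exists_prime_gt_and_eq_mod he_unit 0
  have h4pq := congrArg (ZMod.chineseRemainder h4) hre
  rw [map_natCast, he, RingEquiv.apply_symm_apply, Prod.ext_iff, Prod.fst_natCast,
    Prod.snd_natCast] at h4pq
  have hpq := congrArg (ZMod.chineseRemainder hpq') h4pq.2
  rw [map_natCast, RingEquiv.apply_symm_apply, Prod.ext_iff, Prod.fst_natCast,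
    Prod.snd_natCast] at hpq
  refine ⟨r, hr, ?_, hpq.1 ▸ ha, hpq.2 ▸ hb⟩
  simpa using (ZMod.natCast_eq_natCast_iff' r 1 4).mp (by simpa using h4pq.1)

theorem Nat.exists_eq_mul_of_card_primeFactors_eq_two {n p : ℕ} (hn : Squarefree n)
    (hcard : n.primeFactors.card = 2) (hp : p ∈ n.primeFactors) :
    ∃ q, q.Prime ∧ q ≠ p ∧ n = p * q := by
  obtain ⟨q, hq⟩ := Finset.card_eq_one.mp
    (by rw [Finset.card_erase_of_mem hp, hcard] : (n.primeFactors.erase p).card = 1)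
  have hq_mem : q ∈ n.primeFactors.erase p := hq ▸ Finset.mem_singleton_self q
  refine ⟨q, Nat.prime_of_mem_primeFactors (Finset.mem_of_mem_erase hq_mem),
    Finset.ne_of_mem_erase hq_mem, ?_⟩
  calc n = ∏ ℓ ∈ n.primeFactors, ℓ := (Nat.prod_primeFactors_of_squarefree hn).symm
    _ = p * q := by rw [← Finset.mul_prod_erase _ _ hp, hq, Finset.prod_singleton]

theorem not_isPrincipalIdealRing_of_sq_eq_mul {K : Type*} [Field K] [NumberField K]
    {p q : ℕ} (hp : p.Prime) (hq : q.Prime) (hpq : p ≠ q) (hp4 : p % 4 = 1) (hq2 : q ≠ 2)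
    {α : K} (hα : α ^ 2 = ((p * q : ℤ) : K)) (hK : finrank ℚ K = 2) :
    ¬ IsPrincipalIdealRing (𝓞 K) := by
  have : Fact p.Prime := ⟨hp⟩
  have : Fact q.Prime := ⟨hq⟩
  have hp2 : p ≠ 2 := by rintro rfl; norm_num at hp4
  have hd : Squarefree ((p : ℤ) * q) := by
    rw [← Nat.cast_mul, Int.squarefree_natCast]
    exact Nat.squarefree_mul_iff.mpr
      ⟨(Nat.coprime_primes hp hq).mpr hpq, hp.squarefree, hq.squarefree⟩
  have hd1 : (p : ℤ) * q ≠ 1 := by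
    exact_mod_cast fun h => hp.one_lt.ne' (Nat.eq_one_of_mul_eq_one_right h)
  have hli := linearIndependent_one_of_sq_eq hd hd1 hα
  obtain ⟨r, hr, hr4, hrp, hrq⟩ := exists_prime_mod_four_eq_one_not_isSquare hpq hp2 hq2
  have : Fact r.Prime := ⟨hr⟩
  have hsplit : IsSquare ((p * q : ℤ) : ZMod r) := by
    push_cast
    exact FiniteField.isSquare_mul_of_not_isSquare
      (mt (ZMod.exists_sq_eq_prime_iff_of_mod_four_eq_one hr4 hp2).mp hrp)
      (mt (ZMod.exists_sq_eq_prime_iff_of_mod_four_eq_one hr4 hq2).mp hrq)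
  intro
  obtain ⟨β, hβ⟩ := exists_natAbs_norm_eq_of_not_prime hK hr
    (not_prime_natCast_of_isSquare hd hα hli hK hr (by rintro rfl; norm_num at hr4) hsplit)
  have hnorm := isSquare_intCast_norm_of_dvd hd hα hli hK hp2 (dvd_mul_right _ _) β
  rcases Int.natAbs_eq (Algebra.norm ℤ β) with h | h <;> rw [h, hβ] at hnorm
  · exact hrp (by exact_mod_cast hnorm)
  · have hneg_one : IsSquare (-1 : ZMod p) := ZMod.exists_sq_eq_neg_one_iff.mpr (by omega)
    exact hrp (by simpa using hneg_one.mul hnorm)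

theorem stmt_6_general (d : ℕ) (hdsf : Squarefree d)
    (K : Type*) [Field K] [NumberField K] (α : K)
    (hα : α ^ 2 = (d : K)) (hdeg : Module.finrank ℚ K = 2)
    (hnd : (quadDisc d).primeFactors.card = 2)
    (hcl : classNumber K = 1 ∨ classNumber K = 2)
    (p₁ : ℕ) (hp₁ : p₁.Prime) (hp₁d : p₁ ∣ quadDisc d)
    (hmin : ∀ q : ℕ, q.Prime → q ∣ quadDisc d → p₁ ≤ q)
    (hp₁4 : p₁ % 4 = 1) :
    classNumber K = 2 := by
  refine hcl.resolve_left fun hcl1 => ?_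
  have hd4 : d % 4 = 1 := by
    by_contra h4
    have := hmin 2 Nat.prime_two (by simp [quadDisc, h4, Nat.dvd_mul_right_of_dvd])
    have := hp₁.two_le
    omega
  rw [quadDisc, if_pos hd4] at hnd hp₁d
  obtain ⟨q, hq, hqp, hdq⟩ := Nat.exists_eq_mul_of_card_primeFactors_eq_two hdsf hnd
    (Nat.mem_primeFactors.mpr ⟨hp₁, hp₁d, by omega⟩)
  have hq2 : q ≠ 2 := by rintro rfl; omega
  exact not_isPrincipalIdealRing_of_sq_eq_mul hp₁ hq hqp.symm hp₁4 hq2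
    (by rw [hα, hdq]; push_cast; ring) hdeg (classNumber_eq_one_iff.mp hcl1)

/-- Suppose exactly two rational primes ramify in `K_d = ℚ(√d)` (i.e. `n_d = 2`) and
`h_d ∈ {1, 2}`. If the smallest ramified prime `p₁` satisfies `p₁ ≡ 1 (mod 4)`,
then `h_d = 2`. -/
theorem stmt_6 (d : ℕ) (hd1 : 1 < d) (hdsf : Squarefree d)
    (K : Type*) [Field K] [NumberField K] (α : K)
    (hα : α ^ 2 = (d : K)) (hdeg : Module.finrank ℚ K = 2)
    (hnd : (quadDisc d).primeFactors.card = 2)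
    (hcl : classNumber K = 1 ∨ classNumber K = 2)
    (p₁ : ℕ) (hp₁ : p₁.Prime) (hp₁d : p₁ ∣ quadDisc d)
    (hmin : ∀ q : ℕ, q.Prime → q ∣ quadDisc d → p₁ ≤ q)
    (hp₁4 : p₁ % 4 = 1) :
    classNumber K = 2 :=
  stmt_6_general d hdsf K α hα hdeg hnd hcl p₁ hp₁ hp₁d hmin hp₁4
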